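/- Let v₁, v₂ : 𝕋 → ℝ be L² functions with ‖v₁‖_{L²}, ‖v₂‖_{L²} ≤ M, and let K be differentiable with bounded gradient. Then the map v ↦ v·∇(K∗v) is Lipschitz on the ball of radius M in the sense that ‖v₁∇(K∗v₁) − v₂∇(K∗v₂)‖_{L²} ≤ 2M |𝕋|^{1/2} ‖∇K‖_{L^∞} ‖v₁ − v₂‖_{L²}. -/

import Mathlib

open MeasureTheory

def torusBox (L : ℝ) (n : ℕ) : Set (Fin n → ℝ) :=
  Set.univ.pi fun _ => Set.Ico 0 L

def TorusPeriodic (L : ℝ) {n : ℕ} (f : (Fin n → ℝ) → ℝ) : Prop :=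
  ∀ (x : Fin n → ℝ) (i : Fin n), f (x + Pi.single i L) = f x

noncomputable def torusConv (L : ℝ) {n : ℕ} (K φ : (Fin n → ℝ) → ℝ)
    (x : Fin n → ℝ) : ℝ :=
  ∫ y in torusBox L n, K (x - y) * φ y

/-
The difference splits as `(v₁ - v₂) ∇(K∗v₁) + v₂ ∇(K∗(v₁ - v₂))`. Hölder (`L² × L^∞ → L²`)
bounds each piece, and `‖∇(K∗v)‖_∞ ≤ ‖∇K‖_∞ ‖v‖_{L¹} ≤ ‖∇K‖_∞ |𝕋|^{1/2} ‖v‖_{L²}`.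

Differentiating under the integral needs `‖∇K‖ ≤ ‖∇K‖_{L^∞(𝕋)}` everywhere, not just a.e. on
the box. Periodicity spreads the a.e. bound to all of `ℝⁿ`; a differentiable function whose
derivative is a.e. bounded by `C` is `C`-Lipschitz; and a `C`-Lipschitz function has
derivative bounded by `C` everywhere.
-/

section Lipschitz

variable {E F : Type*} [NormedAddCommGroup E] [NormedSpace ℝ E]
  [NormedAddCommGroup F] [NormedSpace ℝ F] [CompleteSpace F] {f : E → F}

theorem norm_sub_le_of_ae_norm_fderiv_le_segment (hf : Differentiable ℝ f) {C : ℝ} {a b : E}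
    (h : ∀ᵐ t : ℝ, ‖fderiv ℝ f (a + t • (b - a))‖ ≤ C) : ‖f b - f a‖ ≤ C * ‖b - a‖ := by
  set g : ℝ → F := fun t => f (a + t • (b - a))
  have hg : ∀ t, HasDerivAt g (fderiv ℝ f (a + t • (b - a)) (b - a)) t := fun t =>
    (hf _).hasFDerivAt.comp_hasDerivAt t
      (by simpa using ((hasDerivAt_id t).smul_const (b - a)).const_add a)
  have hg'_le : ∀ᵐ t : ℝ, ‖deriv g t‖ ≤ C * ‖b - a‖ := h.mono fun t ht => by
    rw [(hg t).deriv]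
    exact (ContinuousLinearMap.le_opNorm _ _).trans (by gcongr)
  have hg'_int : IntervalIntegrable (deriv g) volume 0 1 :=
    intervalIntegrable_const.mono_fun' (aestronglyMeasurable_deriv g _)
      (ae_restrict_of_ae hg'_le)
  have hftc : ∫ t in (0 : ℝ)..1, deriv g t = f b - f a := by
    rw [intervalIntegral.integral_deriv_eq_sub (fun t _ => (hg t).differentiableAt) hg'_int]
    simp [g]
  calc ‖f b - f a‖ = ‖∫ t in (0 : ℝ)..1, deriv g t‖ := by rw [hftc]
    _ ≤ ∫ t in (0 : ℝ)..1, C * ‖b - a‖ :=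
      intervalIntegral.norm_integral_le_of_norm_le zero_le_one
        (hg'_le.mono fun t ht _ => ht) intervalIntegrable_const
    _ = C * ‖b - a‖ := by simp

variable [MeasurableSpace E] [BorelSpace E] [FiniteDimensional ℝ E]
  (μ : Measure E) [μ.IsAddHaarMeasure]

theorem ae_ae_add_smul_of_ae {p : E → Prop} (h : ∀ᵐ x ∂μ, p x) (v : E) :
    ∀ᵐ w ∂μ, ∀ᵐ t : ℝ, p (w + t • v) := by
  obtain ⟨S, hpS, hS, hS0⟩ := exists_measurable_superset_of_null h
  have hT : MeasurableSet {q : E × ℝ | q.1 + q.2 • v ∈ S} :=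
    (by fun_prop : Continuous fun q : E × ℝ => q.1 + q.2 • v).measurable hS
  have hT0 : μ.prod volume {q : E × ℝ | q.1 + q.2 • v ∈ S} = 0 := by
    rw [Measure.prod_apply_symm hT]
    have hslice : ∀ t : ℝ, (fun w : E => (w, t)) ⁻¹' {q : E × ℝ | q.1 + q.2 • v ∈ S}
        = (· + t • v) ⁻¹' S := fun t => rfl
    simp only [hslice, measure_preimage_add_right, hS0, lintegral_zero]
  have hprod : ∀ᵐ q ∂μ.prod volume, p (q.1 + q.2 • v) :=
    measure_mono_null (fun q hq => hpS hq) hT0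
  exact Measure.ae_ae_of_ae_prod hprod

/- The segment `[a, b]` may lie entirely in the exceptional set, but almost every translate of it
meets that set in a null set; continuity of `f` then passes the bound back to `[a, b]`. -/
theorem lipschitzWith_of_ae_norm_fderiv_le (hf : Differentiable ℝ f) {C : NNReal}
    (h : ∀ᵐ x ∂μ, ‖fderiv ℝ f x‖ ≤ C) : LipschitzWith C f := by
  refine LipschitzWith.of_dist_le_mul fun b a => ?_
  rw [dist_eq_norm, dist_eq_norm]
  have hshift : ∀ᵐ x ∂μ, ‖fderiv ℝ f (x + a)‖ ≤ C :=
    (measurePreserving_add_right μ a).quasiMeasurePreserving.ae h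
  have hgood : ∀ᵐ w ∂μ, ‖f (w + b) - f (w + a)‖ ≤ C * ‖b - a‖ := by
    filter_upwards [ae_ae_add_smul_of_ae μ hshift (b - a)] with w hw
    have := norm_sub_le_of_ae_norm_fderiv_le_segment hf (a := w + a) (b := w + b)
      (by simpa [add_right_comm] using hw)
    simpa using this
  have hclosed : IsClosed {w | ‖f (w + b) - f (w + a)‖ ≤ C * ‖b - a‖} :=
    isClosed_le (by have := hf.continuous; fun_prop) continuous_const
  have hall := (μ.dense_of_ae hgood).closure_eq
  rw [hclosed.closure_eq, Set.eq_univ_iff_forall] at hall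
  simpa using hall 0

end Lipschitz

def periods {G α : Type*} [AddCommGroup G] (f : G → α) : AddSubgroup G where
  carrier := {c | ∀ x, f (x + c) = f x}
  zero_mem' x := by rw [add_zero]
  add_mem' {c d} hc hd x := by rw [← add_assoc, hd, hc]
  neg_mem' {c} hc x := by rw [← hc (x + -c), neg_add_cancel_right]

theorem mem_periods {G α : Type*} [AddCommGroup G] {f : G → α} {c : G} :
    c ∈ periods f ↔ ∀ x, f (x + c) = f x := Iff.rfl

theorem periods_le_periods_fderiv {𝕜 E F : Type*} [NontriviallyNormedField 𝕜]
    [NormedAddCommGroup E] [NormedSpace 𝕜 E] [NormedAddCommGroup F] [NormedSpace 𝕜 F]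
    (f : E → F) : periods f ≤ periods (fderiv 𝕜 f) := fun c hc x => by
  rw [← fderiv_comp_add_right, funext (mem_periods.1 hc)]

section Convolution

variable {E : Type*} [NormedAddCommGroup E] [NormedSpace ℝ E] [FiniteDimensional ℝ E]
  [MeasurableSpace E] [BorelSpace E] {μ : Measure E} {K v : E → ℝ}

theorem aestronglyMeasurable_fderiv_comp_sub (K : E → ℝ) (x : E) :
    AEStronglyMeasurable (fun y => fderiv ℝ K (x - y)) μ :=
  ((measurable_fderiv ℝ K).comp (measurable_const.sub measurable_id)).aestronglyMeasurable

theorem integrable_smul_fderiv_comp_sub {C : ℝ} (hK' : ∀ z, ‖fderiv ℝ K z‖ ≤ C)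
    (hv : Integrable v μ) (x : E) : Integrable (fun y => v y • fderiv ℝ K (x - y)) μ :=
  hv.smul_bdd C (aestronglyMeasurable_fderiv_comp_sub K x) (.of_forall fun _ => hK' _)

theorem hasFDerivAt_integral_comp_sub_mul (hK : Differentiable ℝ K) {C : ℝ}
    (hK' : ∀ z, ‖fderiv ℝ K z‖ ≤ C) (hv : Integrable v μ) {x : E}
    (hKv : Integrable (fun y => K (x - y) * v y) μ) :
    HasFDerivAt (fun x => ∫ y, K (x - y) * v y ∂μ) (∫ y, v y • fderiv ℝ K (x - y) ∂μ) x := by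
  refine hasFDerivAt_integral_of_dominated_of_fderiv_le (bound := fun y => C * ‖v y‖)
    (F := fun x y => K (x - y) * v y) (F' := fun x y => v y • fderiv ℝ K (x - y))
    Filter.univ_mem (.of_forall fun x' => ?_) hKv (integrable_smul_fderiv_comp_sub hK' hv x).1
    (.of_forall fun y x' _ => ?_) (hv.norm.const_mul C) (.of_forall fun y x' _ => ?_)
  · exact (hK.continuous.comp (continuous_const.sub continuous_id)).aestronglyMeasurable.mul hv.1
  · rw [norm_smul, mul_comm]
    exact mul_le_mul_of_nonneg_right (hK' _) (norm_nonneg _)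
  · simpa [mul_comm] using
      ((hK _).hasFDerivAt.comp x' ((hasFDerivAt_id x').sub_const y)).mul_const (v y)

theorem integrableOn_comp_sub_mul {s : Set E} (hs : Bornology.IsBounded s)
    (hs' : MeasurableSet s) (hK : Continuous K) (hv : IntegrableOn v s μ) (x : E) :
    IntegrableOn (fun y => K (x - y) * v y) s μ := by
  obtain ⟨c, hc⟩ := hs.isCompact_closure.exists_bound_of_continuousOn
    (f := fun y => K (x - y)) (by fun_prop)
  exact hv.bdd_mul (by fun_prop) ((ae_restrict_mem hs').mono fun y hy => hc y (subset_closure hy))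

end Convolution

section Torus

variable {n : ℕ} {L : ℝ}

theorem TorusPeriodic.intVec_mem_periods {f : (Fin n → ℝ) → ℝ} (hf : TorusPeriodic L f)
    (k : Fin n → ℤ) : (fun i => (k i : ℝ) * L) ∈ periods f := by
  have hk : (fun i => (k i : ℝ) * L) = ∑ i, k i • Pi.single i L := by
    ext j
    simp [Finset.sum_apply, Pi.single_apply, mul_comm]
  rw [hk]
  exact AddSubgroup.sum_mem _ fun i _ => AddSubgroup.zsmul_mem _ (mem_periods.2 fun x => hf x i) _

theorem measurableSet_torusBox : MeasurableSet (torusBox L n) :=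
  MeasurableSet.univ_pi fun _ => measurableSet_Ico

theorem isBounded_torusBox : Bornology.IsBounded (torusBox L n) :=
  Bornology.IsBounded.pi fun _ => Metric.isBounded_Ico 0 L

theorem add_intVec_mem_torusBox (hL : 0 < L) (z : Fin n → ℝ) :
    ∃ k : Fin n → ℤ, (z + fun i => (k i : ℝ) * L) ∈ torusBox L n := by
  refine ⟨fun i => -toIcoDiv hL 0 (z i), Set.mem_univ_pi.2 fun i => ?_⟩
  have hmod : z i + ((-toIcoDiv hL 0 (z i) : ℤ) : ℝ) * L = toIcoMod hL 0 (z i) := by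
    rw [← self_sub_toIcoDiv_zsmul, zsmul_eq_mul]
    push_cast
    ring
  simpa only [Pi.add_apply, hmod] using toIcoMod_mem_Ico' hL (z i)

theorem ae_of_ae_restrict_torusBox {α : Type*} (hL : 0 < L) {f : (Fin n → ℝ) → α}
    (hf : ∀ k : Fin n → ℤ, (fun i => (k i : ℝ) * L) ∈ periods f) {p : α → Prop}
    (h : ∀ᵐ z ∂volume.restrict (torusBox L n), p (f z)) : ∀ᵐ z, p (f z) := by
  rw [ae_iff, Measure.restrict_apply' measurableSet_torusBox] at h
  rw [ae_iff]
  refine measure_mono_null (t := ⋃ k : Fin n → ℤ,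
    (· + fun i => (k i : ℝ) * L) ⁻¹' ({z | ¬p (f z)} ∩ torusBox L n)) ?_
    (measure_iUnion_null fun k => by rwa [measure_preimage_add_right])
  intro z hz
  obtain ⟨k, hk⟩ := add_intVec_mem_torusBox hL z
  exact Set.mem_iUnion.2 ⟨k, by simpa [hf k z] using And.intro hz hk⟩

instance isFiniteMeasure_restrict_torusBox : IsFiniteMeasure (volume.restrict (torusBox L n)) :=
  isFiniteMeasure_restrict.2 isBounded_torusBox.measure_lt_top.ne

theorem norm_fderiv_le_of_torusPeriodic (hL : 0 < L) {K : (Fin n → ℝ) → ℝ}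
    (hK : Differentiable ℝ K) (hKper : TorusPeriodic L K)
    (hK' : eLpNorm (fun x => ‖fderiv ℝ K x‖) ⊤ (volume.restrict (torusBox L n)) ≠ ⊤)
    (z : Fin n → ℝ) :
    ‖fderiv ℝ K z‖
      ≤ (eLpNorm (fun x => ‖fderiv ℝ K x‖) ⊤ (volume.restrict (torusBox L n))).toNNReal := by
  set C := eLpNorm (fun x => ‖fderiv ℝ K x‖) ⊤ (volume.restrict (torusBox L n))
  have hbox : ∀ᵐ x ∂volume.restrict (torusBox L n), ‖fderiv ℝ K x‖ ≤ C.toNNReal := by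
    filter_upwards [ae_le_eLpNormEssSup (f := fun x => ‖fderiv ℝ K x‖)] with x hx
    rw [← eLpNorm_exponent_top] at hx
    simpa using NNReal.coe_le_coe.2 (ENNReal.toNNReal_mono hK' hx)
  have hall := ae_of_ae_restrict_torusBox hL
    (fun k => periods_le_periods_fderiv K (hKper.intVec_mem_periods k))
    (p := fun D => ‖D‖ ≤ C.toNNReal) hbox
  exact norm_fderiv_le_of_lipschitz ℝ (lipschitzWith_of_ae_norm_fderiv_le volume hK hall)

noncomputable def partials (f : (Fin n → ℝ) → ℝ) (x : Fin n → ℝ) : Fin n → ℝ :=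
  fun i => fderiv ℝ f x (Pi.single i 1)

theorem norm_partials_le (f : (Fin n → ℝ) → ℝ) (x : Fin n → ℝ) :
    ‖partials f x‖ ≤ ‖fderiv ℝ f x‖ := by
  refine (pi_norm_le_iff_of_nonneg (norm_nonneg _)).2 fun i => ?_
  calc ‖partials f x i‖ ≤ ‖fderiv ℝ f x‖ * ‖(Pi.single i 1 : Fin n → ℝ)‖ :=
        (fderiv ℝ f x).le_opNorm _
    _ = ‖fderiv ℝ f x‖ := by rw [Pi.norm_single, norm_one, mul_one]

theorem measurable_partials (f : (Fin n → ℝ) → ℝ) : Measurable (partials f) :=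
  measurable_pi_lambda _ fun _ => measurable_fderiv_apply_const ℝ f _

variable {K v v₁ v₂ : (Fin n → ℝ) → ℝ} {C : NNReal}

theorem hasFDerivAt_torusConv (hK : Differentiable ℝ K) (hK' : ∀ z, ‖fderiv ℝ K z‖ ≤ C)
    (hv : IntegrableOn v (torusBox L n)) (x : Fin n → ℝ) :
    HasFDerivAt (torusConv L K v) (∫ y in torusBox L n, v y • fderiv ℝ K (x - y)) x :=
  hasFDerivAt_integral_comp_sub_mul hK hK' hv
    (integrableOn_comp_sub_mul isBounded_torusBox measurableSet_torusBox hK.continuous hv x)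

theorem partials_torusConv_sub (hK : Differentiable ℝ K) (hK' : ∀ z, ‖fderiv ℝ K z‖ ≤ C)
    (hv₁ : IntegrableOn v₁ (torusBox L n)) (hv₂ : IntegrableOn v₂ (torusBox L n)) :
    partials (torusConv L K v₁) - partials (torusConv L K v₂)
      = partials (torusConv L K (v₁ - v₂)) := by
  ext x i
  simp only [partials, Pi.sub_apply, (hasFDerivAt_torusConv hK hK' hv₁ x).fderiv,
    (hasFDerivAt_torusConv hK hK' hv₂ x).fderiv,
    (hasFDerivAt_torusConv hK hK' (hv₁.sub hv₂) x).fderiv]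
  rw [← sub_apply, ← integral_sub (integrable_smul_fderiv_comp_sub hK' hv₁ x)
    (integrable_smul_fderiv_comp_sub hK' hv₂ x)]
  congr 2 with y : 1
  exact (sub_smul _ _ _).symm

theorem smul_partials_torusConv_sub_smul_eq (hK : Differentiable ℝ K)
    (hK' : ∀ z, ‖fderiv ℝ K z‖ ≤ C) (hv₁ : IntegrableOn v₁ (torusBox L n))
    (hv₂ : IntegrableOn v₂ (torusBox L n)) :
    (fun x => v₁ x • partials (torusConv L K v₁) x - v₂ x • partials (torusConv L K v₂) x)
      = (v₁ - v₂) • partials (torusConv L K v₁) + v₂ • partials (torusConv L K (v₁ - v₂)) := by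
  rw [← partials_torusConv_sub hK hK' hv₁ hv₂]
  ext x : 1
  simp only [Pi.add_apply, Pi.smul_apply', Pi.sub_apply, sub_smul, smul_sub]
  abel

theorem enorm_fderiv_torusConv_le (hK : Differentiable ℝ K) (hK' : ∀ z, ‖fderiv ℝ K z‖ ≤ C)
    (hv : IntegrableOn v (torusBox L n)) (x : Fin n → ℝ) :
    ‖fderiv ℝ (torusConv L K v) x‖ₑ ≤ C * eLpNorm v 1 (volume.restrict (torusBox L n)) := by
  rw [(hasFDerivAt_torusConv hK hK' hv x).fderiv, eLpNorm_one_eq_lintegral_enorm,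
    ← lintegral_const_mul' _ _ ENNReal.coe_ne_top]
  refine (enorm_integral_le_lintegral_enorm _).trans (lintegral_mono fun y => ?_)
  rw [enorm_smul, mul_comm]
  gcongr
  simpa [← ofReal_norm] using ENNReal.ofReal_le_ofReal (hK' (x - y))

theorem eLpNorm_top_partials_torusConv_le (hK : Differentiable ℝ K) (hK' : ∀ z, ‖fderiv ℝ K z‖ ≤ C)
    (hv : MemLp v 2 (volume.restrict (torusBox L n))) :
    eLpNorm (partials (torusConv L K v)) ⊤ (volume.restrict (torusBox L n))
      ≤ C * (volume.restrict (torusBox L n)) Set.univ ^ ((1 : ℝ) / 2)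
        * eLpNorm v 2 (volume.restrict (torusBox L n)) := by
  rw [eLpNorm_exponent_top]
  refine eLpNormEssSup_le_of_ae_enorm_bound (.of_forall fun x => ?_)
  have hL1L2 : eLpNorm v 1 (volume.restrict (torusBox L n))
      ≤ eLpNorm v 2 (volume.restrict (torusBox L n))
        * (volume.restrict (torusBox L n)) Set.univ ^ ((1 : ℝ) / 2) := by
    convert eLpNorm_le_eLpNorm_mul_rpow_measure_univ one_le_two hv.1 using 3
    norm_num
  calc ‖partials (torusConv L K v) x‖ₑ ≤ ‖fderiv ℝ (torusConv L K v) x‖ₑ :=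
        enorm_le_iff_norm_le.2 (norm_partials_le _ x)
    _ ≤ C * eLpNorm v 1 (volume.restrict (torusBox L n)) :=
        enorm_fderiv_torusConv_le hK hK' (hv.integrable one_le_two) x
    _ ≤ _ := by
        rw [mul_assoc, mul_comm ((volume.restrict (torusBox L n)) Set.univ ^ _)]
        gcongr

end Torus

theorem stmt16_general (n : ℕ) (L : ℝ) (hL : 0 < L) (M : ℝ)
    (μ : Measure (Fin n → ℝ)) (hμ : μ = volume.restrict (torusBox L n))
    (K v₁ v₂ : (Fin n → ℝ) → ℝ)
    (hK : Differentiable ℝ K) (hKper : TorusPeriodic L K)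
    (hK' : eLpNorm (fun x => ‖fderiv ℝ K x‖) ⊤ μ < ⊤)
    (hv₁ : MemLp v₁ 2 μ) (hv₂ : MemLp v₂ 2 μ)
    (hv₁M : eLpNorm v₁ 2 μ ≤ ENNReal.ofReal M)
    (hv₂M : eLpNorm v₂ 2 μ ≤ ENNReal.ofReal M) :
    eLpNorm
        (fun x => ‖v₁ x • (fun i => fderiv ℝ (torusConv L K v₁) x (Pi.single i 1))
          - v₂ x • (fun i => fderiv ℝ (torusConv L K v₂) x (Pi.single i 1))‖) 2 μ
      ≤ ENNReal.ofReal (2 * M) * (μ Set.univ) ^ ((1 : ℝ)/2)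
        * eLpNorm (fun x => ‖fderiv ℝ K x‖) ⊤ μ
        * eLpNorm (v₁ - v₂) 2 μ := by
  subst hμ
  set μ := volume.restrict (torusBox L n)
  set C := eLpNorm (fun x => ‖fderiv ℝ K x‖) ⊤ μ
  set T := μ Set.univ ^ ((1 : ℝ) / 2)
  have hKC := norm_fderiv_le_of_torusPeriodic hL hK hKper hK'.ne
  have hgrad (v) (hv : MemLp v 2 μ) :
      eLpNorm (partials (torusConv L K v)) ⊤ μ ≤ C * T * eLpNorm v 2 μ := by
    rw [← ENNReal.coe_toNNReal hK'.ne]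
    exact eLpNorm_top_partials_torusConv_le hK hKC hv
  calc _ = eLpNorm ((v₁ - v₂) • partials (torusConv L K v₁)
          + v₂ • partials (torusConv L K (v₁ - v₂))) 2 μ := by
        rw [eLpNorm_norm, ← smul_partials_torusConv_sub_smul_eq hK hKC
          (hv₁.integrable one_le_two) (hv₂.integrable one_le_two)]
        rfl
    _ ≤ eLpNorm (v₁ - v₂) 2 μ * eLpNorm (partials (torusConv L K v₁)) ⊤ μ
          + eLpNorm v₂ 2 μ * eLpNorm (partials (torusConv L K (v₁ - v₂))) ⊤ μ :=
        (eLpNorm_add_le ((hv₁.1.sub hv₂.1).smul (measurable_partials _).aestronglyMeasurable)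
          (hv₂.1.smul (measurable_partials _).aestronglyMeasurable) one_le_two).trans
        (add_le_add (eLpNorm_smul_le_eLpNorm_mul_eLpNorm_top _ _ (hv₁.1.sub hv₂.1))
          (eLpNorm_smul_le_eLpNorm_mul_eLpNorm_top _ _ hv₂.1))
    _ ≤ eLpNorm (v₁ - v₂) 2 μ * (C * T * ENNReal.ofReal M)
          + ENNReal.ofReal M * (C * T * eLpNorm (v₁ - v₂) 2 μ) := by
        gcongr
        · exact (hgrad v₁ hv₁).trans (by gcongr)
        · exact hgrad _ (hv₁.sub hv₂)
    _ = _ := by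
        rw [ENNReal.ofReal_mul zero_le_two, ENNReal.ofReal_ofNat]
        ring

/-- **Lipschitz estimate for the nonlinearity.** For `v₁, v₂ ∈ L²(𝕋)` with
`‖v₁‖_{L²}, ‖v₂‖_{L²} ≤ M` and `K` differentiable with bounded gradient,
`‖v₁∇(K∗v₁) − v₂∇(K∗v₂)‖_{L²} ≤ 2M |𝕋|^{1/2} ‖∇K‖_{L^∞} ‖v₁ − v₂‖_{L²}`. -/
theorem stmt16 (n : ℕ) (L : ℝ) (hL : 0 < L) (M : ℝ) (hM : 0 < M)
    (μ : Measure (Fin n → ℝ)) (hμ : μ = volume.restrict (torusBox L n))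
    (K v₁ v₂ : (Fin n → ℝ) → ℝ)
    (hK : Differentiable ℝ K) (hKper : TorusPeriodic L K)
    (hK' : eLpNorm (fun x => ‖fderiv ℝ K x‖) ⊤ μ < ⊤)
    (hv₁ : MemLp v₁ 2 μ) (hv₂ : MemLp v₂ 2 μ)
    (hv₁per : TorusPeriodic L v₁) (hv₂per : TorusPeriodic L v₂)
    (hv₁M : eLpNorm v₁ 2 μ ≤ ENNReal.ofReal M)
    (hv₂M : eLpNorm v₂ 2 μ ≤ ENNReal.ofReal M) :
    eLpNorm
        (fun x => ‖v₁ x • (fun i => fderiv ℝ (torusConv L K v₁) x (Pi.single i 1))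
          - v₂ x • (fun i => fderiv ℝ (torusConv L K v₂) x (Pi.single i 1))‖) 2 μ
      ≤ ENNReal.ofReal (2 * M) * (μ Set.univ) ^ ((1 : ℝ)/2)
        * eLpNorm (fun x => ‖fderiv ℝ K x‖) ⊤ μ
        * eLpNorm (v₁ - v₂) 2 μ :=
  stmt16_general n L hL M μ hμ K v₁ v₂ hK hKper hK' hv₁ hv₂ hv₁M hv₂M
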